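/- arXiv:2403.17585 — 3 statements merged into one kernel-verified Lean document; each statement's English description precedes it below -/
import Mathlib

section
/- Suppose f is analytic near 0 with f(0) = 0, f'(0) ≠ 0, f has an analytic inverse near the origin, and f is nonzero on (0,∞) and bounded on [0,∞). Then the function G(t,x) = sqrt( ((t - f(x))/(f⁻¹(t) - x)) · (x/f(x)) ) is analytic in a neighborhood of the origin and satisfies G(0,x) = 1. -/
open Filter Topology
open scoped NNReal ENNReal

private lemma prod_ite_pow (n k : ℕ) (hk : k ≤ n) (u x : ℝ) :
    (∏ i : Fin n, (if (i : ℕ) < k then u else x)) = u ^ k * x ^ (n - k) := by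
  rw [Fin.prod_univ_eq_prod_range (fun i => if i < k then u else x) n,
    ← Finset.prod_range_mul_prod_Ico _ hk]
  congr 1
  · rw [Finset.prod_congr rfl (fun i hi => if_pos (Finset.mem_range.mp hi)),
      Finset.prod_const, Finset.card_range]
  · rw [Finset.prod_congr rfl (fun i hi => if_neg (by
      simp only [Finset.mem_Ico] at hi; omega)), Finset.prod_const, Nat.card_Ico]

private lemma exists_Q (f : ℝ → ℝ) (hf : AnalyticAt ℝ f 0) :
    ∃ Q : ℝ × ℝ → ℝ, AnalyticAt ℝ Q (0, 0) ∧ Q (0, 0) = deriv f 0 ∧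
      (∀ x : ℝ, Q (0, x) = Q (x, 0)) ∧
      (∀ᶠ p : ℝ × ℝ in nhds (0, 0), (p.1 - p.2) * Q p = f p.1 - f p.2) := by
  obtain ⟨p, hp⟩ := hf
  obtain ⟨r, hpr⟩ := hp
  obtain ⟨r0, hr00, hr0r⟩ := ENNReal.lt_iff_exists_nnreal_btwn.mp hpr.r_pos
  have hr0pos : (0:ℝ) < (r0:ℝ) := by exact_mod_cast hr00
  have hrad : (r0 : ℝ≥0∞) < p.radius := hr0r.trans_le hpr.r_le
  obtain ⟨C, hC, hbound⟩ := p.norm_mul_pow_le_of_lt_radius hrad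
  set a : ℕ → ℝ := fun n => p.coeff n with ha_def
  have hacoeff : ∀ n, |a n| ≤ ‖p n‖ := by
    intro n
    have hcoeff : a n = p n 1 := rfl
    have h := (p n).le_opNorm 1
    simp only [Pi.one_apply, norm_one, Finset.prod_const, one_pow, mul_one] at h
    rw [hcoeff, ← Real.norm_eq_abs]
    exact h
  have ha : ∀ n, |a n| * (r0:ℝ) ^ n ≤ C := fun n =>
    le_trans (by gcongr; exact hacoeff n) (hbound n)
  -- the explicit divided-difference sum
  set S : ℝ × ℝ → ℕ → ℝ := fun y n =>
    a (n + 1) * ∑ k ∈ Finset.range (n + 1), y.1 ^ k * y.2 ^ (n - k) with hS_def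
  set Q : ℝ × ℝ → ℝ := fun y => ∑' n, S y n with hQ_def
  -- bound on S
  have hSb : ∀ y : ℝ × ℝ, ∀ n, |S y n| ≤ C / r0 * ((n + 1) * (‖y‖ / r0) ^ n) := by
    intro y n
    have h1 : |∑ k ∈ Finset.range (n + 1), y.1 ^ k * y.2 ^ (n - k)|
        ≤ (n + 1) * ‖y‖ ^ n := by
      have hterm : ∀ k ∈ Finset.range (n + 1), |y.1 ^ k * y.2 ^ (n - k)| ≤ ‖y‖ ^ n := by
        intro k hk
        have hk' : k ≤ n := Nat.lt_succ_iff.mp (Finset.mem_range.mp hk)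
        have hy1 : |y.1| ≤ ‖y‖ := norm_fst_le y
        have hy2 : |y.2| ≤ ‖y‖ := norm_snd_le y
        calc |y.1 ^ k * y.2 ^ (n - k)| = |y.1| ^ k * |y.2| ^ (n - k) := by
              rw [abs_mul, abs_pow, abs_pow]
          _ ≤ ‖y‖ ^ k * ‖y‖ ^ (n - k) :=
              mul_le_mul (pow_le_pow_left₀ (abs_nonneg _) hy1 k)
                (pow_le_pow_left₀ (abs_nonneg _) hy2 _) (by positivity) (by positivity)
          _ = ‖y‖ ^ n := by rw [← pow_add]; congr 1; omega
      calc |∑ k ∈ Finset.range (n + 1), y.1 ^ k * y.2 ^ (n - k)|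
          ≤ ∑ k ∈ Finset.range (n + 1), |y.1 ^ k * y.2 ^ (n - k)| :=
            Finset.abs_sum_le_sum_abs _ _
        _ ≤ ∑ _k ∈ Finset.range (n + 1), ‖y‖ ^ n := Finset.sum_le_sum hterm
        _ = (n + 1) * ‖y‖ ^ n := by
            rw [Finset.sum_const, Finset.card_range, nsmul_eq_mul]
            push_cast
            ring
    have h2 : |a (n + 1)| ≤ C / (r0:ℝ) ^ (n + 1) := by
      rw [le_div_iff₀ (by positivity)]
      exact ha (n + 1)
    have h3 : |S y n| ≤ |a (n + 1)| * ((n + 1) * ‖y‖ ^ n) := by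
      rw [abs_mul]
      exact mul_le_mul_of_nonneg_left h1 (abs_nonneg _)
    calc |S y n| ≤ (C / (r0:ℝ) ^ (n + 1)) * ((n + 1) * ‖y‖ ^ n) :=
          h3.trans (mul_le_mul_of_nonneg_right h2 (by positivity))
      _ = C / r0 * ((n + 1) * (‖y‖ / r0) ^ n) := by
          simp only [div_pow, pow_succ, div_eq_mul_inv, mul_inv]
          ring
  have hsummable : ∀ y : ℝ × ℝ, ‖y‖ < r0 → Summable (S y) := by
    intro y hy
    have hq : ‖y‖ / (r0:ℝ) < 1 := by
      rw [div_lt_one hr0pos]; exact hy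
    have hq' : ‖(‖y‖ / (r0:ℝ))‖ < 1 := by
      rw [Real.norm_eq_abs, abs_of_nonneg (by positivity)]; exact hq
    have hs : Summable (fun n : ℕ => ((n:ℝ) + 1) * (‖y‖ / r0) ^ n) := by
      have h1 : Summable (fun n : ℕ => (n:ℝ) ^ 1 * (‖y‖ / r0) ^ n) :=
        summable_pow_mul_geometric_of_norm_lt_one 1 hq'
      have h2 : Summable (fun n : ℕ => (‖y‖ / r0) ^ n) :=
        summable_geometric_of_lt_one (by positivity) hq
      simpa [pow_one, add_mul, one_mul] using h1.add h2
    apply Summable.of_abs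
    apply Summable.of_nonneg_of_le (fun n => abs_nonneg _) (fun n => hSb y n)
    exact hs.mul_left _
  -- the formal multilinear series for Q
  set Qs : FormalMultilinearSeries ℝ (ℝ × ℝ) ℝ := fun n =>
    a (n + 1) • ∑ k ∈ Finset.range (n + 1),
      (ContinuousMultilinearMap.mkPiAlgebra ℝ (Fin n) ℝ).compContinuousLinearMap
        (fun i => if (i : ℕ) < k then ContinuousLinearMap.fst ℝ ℝ ℝ
          else ContinuousLinearMap.snd ℝ ℝ ℝ) with hQs_def
  have hQs_apply : ∀ (n : ℕ) (y : ℝ × ℝ), (Qs n fun _ => y) = S y n := by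
    intro n y
    rw [hQs_def]
    simp only [ContinuousMultilinearMap.smul_apply, ContinuousMultilinearMap.sum_apply,
      ContinuousMultilinearMap.compContinuousLinearMap_apply,
      ContinuousMultilinearMap.mkPiAlgebra_apply, smul_eq_mul, hS_def]
    congr 1
    apply Finset.sum_congr rfl
    intro k hk
    have hk' : k ≤ n := Nat.lt_succ_iff.mp (Finset.mem_range.mp hk)
    rw [← prod_ite_pow n k hk' y.1 y.2]
    apply Finset.prod_congr rfl
    intro i _
    by_cases h : (i : ℕ) < k <;> simp [h]
  have hQs_norm : ∀ n : ℕ, ‖Qs n‖ ≤ |a (n + 1)| * (n + 1) := by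
    intro n
    rw [hQs_def]
    simp only
    refine le_trans (ContinuousMultilinearMap.opNorm_smul_le _ _) ?_
    rw [Real.norm_eq_abs]
    apply mul_le_mul_of_nonneg_left _ (abs_nonneg _)
    calc ‖∑ k ∈ Finset.range (n + 1),
          (ContinuousMultilinearMap.mkPiAlgebra ℝ (Fin n) ℝ).compContinuousLinearMap
            (fun i => if (i : ℕ) < k then ContinuousLinearMap.fst ℝ ℝ ℝ
              else ContinuousLinearMap.snd ℝ ℝ ℝ)‖
        ≤ ∑ _k ∈ Finset.range (n + 1), (1:ℝ) := by
          refine (norm_sum_le _ _).trans (Finset.sum_le_sum fun k _ => ?_)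
          refine (ContinuousMultilinearMap.norm_compContinuousLinearMap_le _ _).trans ?_
          rw [ContinuousMultilinearMap.norm_mkPiAlgebra, one_mul]
          refine Finset.prod_le_one (fun i _ => norm_nonneg _) (fun i _ => ?_)
          by_cases h : (i : ℕ) < k
          · rw [if_pos h]; exact ContinuousLinearMap.norm_fst_le ℝ ℝ ℝ
          · rw [if_neg h]; exact ContinuousLinearMap.norm_snd_le ℝ ℝ ℝ
      _ = (n + 1 : ℝ) := by simp
  have hradQ : ((r0 / 2 : ℝ≥0) : ℝ≥0∞) ≤ Qs.radius := by
    apply Qs.le_radius_of_bound (C / r0)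
    intro n
    have hco : ((r0 / 2 : ℝ≥0) : ℝ) = (r0 : ℝ) / 2 := by push_cast; ring
    have hstep : ((n : ℝ) + 1) * ((r0:ℝ) / 2) ^ n ≤ (r0:ℝ) ^ n := by
      rw [div_pow]
      rw [mul_div_assoc']
      rw [div_le_iff₀ (by positivity)]
      have h2n : ((n : ℝ) + 1) ≤ 2 ^ n := by
        have := Nat.lt_two_pow_self (n := n)
        exact_mod_cast Nat.succ_le_of_lt this
      calc ((n : ℝ) + 1) * (r0:ℝ) ^ n ≤ 2 ^ n * (r0:ℝ) ^ n :=
            mul_le_mul_of_nonneg_right h2n (by positivity)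
        _ = (r0:ℝ) ^ n * 2 ^ n := by ring
    calc ‖Qs n‖ * ((r0 / 2 : ℝ≥0) : ℝ) ^ n ≤ (|a (n + 1)| * (n + 1)) * ((r0:ℝ) / 2) ^ n := by
          rw [hco]
          exact mul_le_mul_of_nonneg_right (hQs_norm n) (by positivity)
      _ = |a (n + 1)| * (((n:ℝ) + 1) * ((r0:ℝ) / 2) ^ n) := by ring
      _ ≤ |a (n + 1)| * (r0:ℝ) ^ n := mul_le_mul_of_nonneg_left hstep (abs_nonneg _)
      _ ≤ C / r0 := by
          rw [le_div_iff₀ hr0pos, mul_assoc, ← pow_succ]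
          exact ha (n + 1)
  have hr0ne : r0 ≠ 0 := by exact_mod_cast hr0pos.ne'
  have hr2pos : (0 : ℝ≥0∞) < ((r0 / 2 : ℝ≥0) : ℝ≥0∞) := by
    rw [ENNReal.coe_pos, pos_iff_ne_zero]
    simp [div_eq_zero_iff, hr0ne]
  have hball : HasFPowerSeriesOnBall Q Qs 0 ((r0 / 2 : ℝ≥0) : ℝ≥0∞) := by
    refine ⟨hradQ, hr2pos, ?_⟩
    intro y hy
    rw [zero_add]
    have hy' : ‖y‖ < (r0 : ℝ) := by
      rw [EMetric.mem_ball, edist_zero_right, ← ofReal_norm] at hy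
      have h2 : ((r0 / 2 : ℝ≥0) : ℝ≥0∞) ≤ ENNReal.ofReal (r0 : ℝ) := by
        rw [ENNReal.ofReal_coe_nnreal]
        exact_mod_cast ENNReal.coe_le_coe.mpr (by
          rw [div_le_iff₀ (by norm_num)]
          exact le_mul_of_one_le_right zero_le (by norm_num))
      have := lt_of_lt_of_le hy h2
      rwa [ENNReal.ofReal_lt_ofReal_iff hr0pos] at this
    simp only [hQs_apply]
    exact (hsummable y hy').hasSum
  have hQan : AnalyticAt ℝ Q (0, 0) := by
    rw [Prod.mk_zero_zero]
    exact hball.analyticAt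
  have hQval : Q (0, 0) = a 1 := by
    have h0 : ∀ n : ℕ, n ≠ 0 → S (0, 0) n = 0 := by
      intro n hn
      rw [hS_def]
      simp only
      rw [Finset.sum_eq_zero, mul_zero]
      intro k hk
      by_cases hk0 : k = 0
      · subst hk0
        simp [zero_pow hn]
      · simp [zero_pow hk0]
    rw [hQ_def]
    simp only
    rw [tsum_eq_single 0 fun n hn => h0 n hn]
    rw [hS_def]
    norm_num
  have hsymm : ∀ x : ℝ, Q (0, x) = Q (x, 0) := by
    intro x
    rw [hQ_def]
    simp only
    apply tsum_congr
    intro n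
    rw [hS_def]
    simp only
    congr 1
    rw [Finset.sum_eq_single 0 (fun k _ hk0 => by simp [zero_pow hk0]) (by simp),
      Finset.sum_eq_single n (fun k hk hkn => by
        have : n - k ≠ 0 := by
          have := Finset.mem_range.mp hk; omega
        simp [zero_pow this]) (by simp)]
    simp
  have hfs : ∀ z : ℝ, ‖z‖ < (r0 : ℝ) → HasSum (fun n => a n * z ^ n) (f z) := by
    intro z hz
    have hz' : z ∈ Metric.eball (0 : ℝ) r := by
      rw [EMetric.mem_ball, edist_zero_right, ← ofReal_norm]
      calc ENNReal.ofReal ‖z‖ < ENNReal.ofReal (r0 : ℝ) :=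
            ENNReal.ofReal_lt_ofReal_iff hr0pos |>.mpr hz
        _ = (r0 : ℝ≥0∞) := ENNReal.ofReal_coe_nnreal
        _ < r := hr0r
    have h := hpr.hasSum hz'
    rw [zero_add] at h
    have heq : ∀ n : ℕ, (p n fun _ => z) = a n * z ^ n := by
      intro n
      rw [p.apply_eq_pow_smul_coeff, smul_eq_mul]
      ring
    simpa only [heq] using h
  have hident : ∀ u x : ℝ, ‖u‖ < (r0:ℝ) → ‖x‖ < (r0:ℝ) →
      (u - x) * Q (u, x) = f u - f x := by
    intro u x hu hx
    have h1 := (hfs u hu).sub (hfs x hx)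
    have h1' : HasSum (fun n => a n * (u ^ n - x ^ n)) (f u - f x) := by
      simpa [mul_sub] using h1
    have h2 : HasSum (fun n => a (n + 1) * (u ^ (n + 1) - x ^ (n + 1))) (f u - f x) := by
      have h := (hasSum_nat_add_iff' 1).mpr h1'
      simpa using h
    have hyp : ‖((u, x) : ℝ × ℝ)‖ < (r0:ℝ) := by
      rw [Prod.norm_def]
      exact max_lt hu hx
    have h3 : HasSum (fun n => (u - x) * S (u, x) n) ((u - x) * Q (u, x)) := by
      rw [hQ_def]
      simp only
      exact (hsummable (u, x) hyp).hasSum.mul_left _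
    have h4 : ∀ n : ℕ, (u - x) * S (u, x) n = a (n + 1) * (u ^ (n + 1) - x ^ (n + 1)) := by
      intro n
      rw [hS_def]
      simp only
      have hg := geom_sum₂_mul u x (n + 1)
      simp only [Nat.add_sub_cancel] at hg
      calc (u - x) * (a (n + 1) * ∑ k ∈ Finset.range (n + 1), u ^ k * x ^ (n - k))
          = a (n + 1) * ((∑ k ∈ Finset.range (n + 1), u ^ k * x ^ (n - k)) * (u - x)) := by
            ring
        _ = a (n + 1) * (u ^ (n + 1) - x ^ (n + 1)) := by rw [hg]
    rw [funext h4] at h3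
    exact h3.unique h2
  refine ⟨Q, hQan, ?_, hsymm, ?_⟩
  · rw [hQval]
    have hppt : HasFPowerSeriesAt f p 0 := ⟨r, hpr⟩
    exact hppt.deriv.symm
  · have hmem : ∀ᶠ q : ℝ × ℝ in nhds (0, 0), ‖q.1‖ < (r0:ℝ) ∧ ‖q.2‖ < (r0:ℝ) := by
      filter_upwards [Metric.ball_mem_nhds ((0,0) : ℝ × ℝ) hr0pos] with q hq
      rw [Prod.mk_zero_zero, mem_ball_zero_iff] at hq
      exact ⟨lt_of_le_of_lt (norm_fst_le q) hq, lt_of_le_of_lt (norm_snd_le q) hq⟩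
    filter_upwards [hmem] with q hq
    exact hident q.1 q.2 hq.1 hq.2

/-- If `f` is analytic near `0` with `f(0) = 0`, `f'(0) ≠ 0`, an analytic local inverse `g`,
`f ≠ 0` on `(0,∞)` and `f` bounded on `[0,∞)`, then
`G(t,x) = sqrt( ((t - f(x))/(f⁻¹(t) - x)) ⬝ (x/f(x)) )` extends to a function analytic in a
neighborhood of the origin with `G(0,x) = 1`. -/
theorem stmt_3 (f g : ℝ → ℝ)
    (hf : AnalyticAt ℝ f 0) (hf0 : f 0 = 0) (hf'0 : deriv f 0 ≠ 0)
    (hg : AnalyticAt ℝ g 0) (hg0 : g 0 = 0)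
    (hinv : ∀ᶠ x in nhds (0 : ℝ), g (f x) = x ∧ f (g x) = x)
    (hne : ∀ x : ℝ, 0 < x → f x ≠ 0)
    (hbdd : ∃ M : ℝ, ∀ x : ℝ, 0 ≤ x → |f x| ≤ M) :
    ∃ G : ℝ × ℝ → ℝ,
      AnalyticAt ℝ G (0, 0) ∧
      (∀ᶠ p : ℝ × ℝ in nhds (0, 0), g p.1 ≠ p.2 → f p.2 ≠ 0 →
        G p = Real.sqrt ((p.1 - f p.2) / (g p.1 - p.2) * (p.2 / f p.2))) ∧
      (∀ᶠ x in nhds (0 : ℝ), G (0, x) = 1) := by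
  obtain ⟨Q, hQan, hQ00, hQsymm, hQid⟩ := exists_Q f hf
  have ha1 : Q (0, 0) ≠ 0 := by rw [hQ00]; exact hf'0
  have hgfst : AnalyticAt ℝ (fun q : ℝ × ℝ => g q.1) (0, 0) := by
    have h : AnalyticAt ℝ (g ∘ (Prod.fst : ℝ × ℝ → ℝ)) ((0 : ℝ), (0 : ℝ)) :=
      AnalyticAt.comp_of_eq hg analyticAt_fst rfl
    exact h
  have hφ : AnalyticAt ℝ (fun q : ℝ × ℝ => ((g q.1, q.2) : ℝ × ℝ)) (0, 0) :=
    hgfst.prod analyticAt_snd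
  have hQg : AnalyticAt ℝ Q (g 0, 0) := by rw [hg0]; exact hQan
  have hN : AnalyticAt ℝ (fun q : ℝ × ℝ => Q (g q.1, q.2)) (0, 0) :=
    AnalyticAt.comp₂ (h := Q) (f := fun q : ℝ × ℝ => g q.1) (g := fun q : ℝ × ℝ => q.2)
      hQg hgfst analyticAt_snd
  have hD : AnalyticAt ℝ (fun q : ℝ × ℝ => Q (q.2, 0)) (0, 0) :=
    AnalyticAt.comp₂ (h := Q) (f := fun q : ℝ × ℝ => q.2) (g := fun _ : ℝ × ℝ => (0 : ℝ))
      hQan analyticAt_snd analyticAt_const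
  set H : ℝ × ℝ → ℝ := fun q => Q (g q.1, q.2) / Q (q.2, 0) with hH_def
  have hHan : AnalyticAt ℝ H (0, 0) := hN.div hD ha1
  have hH00 : H (0, 0) = 1 := by
    rw [hH_def]
    simp only
    rw [hg0, div_self ha1]
  have hlog : AnalyticAt ℝ Real.log 1 := by
    have hofReal : AnalyticAt ℝ (fun x : ℝ => (x : ℂ)) 1 := Complex.ofRealCLM.analyticAt 1
    have hclog : AnalyticAt ℂ Complex.log (((1:ℝ) : ℂ)) :=
      analyticAt_clog (by simp)
    have h2 : AnalyticAt ℝ (fun x : ℝ => Complex.log (x : ℂ)) 1 :=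
      (hclog.restrictScalars).comp hofReal
    have h1 : AnalyticAt ℝ (fun x : ℝ => (Complex.log (x : ℂ)).re) 1 :=
      (Complex.reCLM.analyticAt _).comp h2
    exact h1.congr (Filter.Eventually.of_forall fun x => Complex.log_ofReal_re x)
  have hsqrt : AnalyticAt ℝ Real.sqrt 1 := by
    have h2 : AnalyticAt ℝ (fun y : ℝ => Real.exp (Real.log y * (1/2 : ℝ))) 1 :=
      analyticAt_rexp.comp (hlog.mul analyticAt_const)
    apply h2.congr
    filter_upwards [eventually_gt_nhds (by norm_num : (0:ℝ) < 1)] with y hy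
    rw [Real.sqrt_eq_rpow, Real.rpow_def_of_pos hy]
  refine ⟨fun q => Real.sqrt (H q), ?_, ?_, ?_⟩
  · have h1 : AnalyticAt ℝ Real.sqrt (H (0, 0)) := by rw [hH00]; exact hsqrt
    exact h1.comp hHan
  · have hφ0 : (fun q : ℝ × ℝ => ((g q.1, q.2) : ℝ × ℝ)) (0, 0) = (0, 0) := by
      simp [hg0]
    have hA : ∀ᶠ q : ℝ × ℝ in nhds (0, 0),
        (g q.1 - q.2) * Q (g q.1, q.2) = f (g q.1) - f q.2 := by
      have ht : Filter.Tendsto (fun q : ℝ × ℝ => ((g q.1, q.2) : ℝ × ℝ))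
          (nhds (0, 0)) (nhds (0, 0)) := by
        have h : Filter.Tendsto (fun q : ℝ × ℝ => ((g q.1, q.2) : ℝ × ℝ))
            (nhds (0, 0)) (nhds (g 0, 0)) := hφ.continuousAt
        rw [hg0] at h
        exact h
      exact ht.eventually hQid
    have hB : ∀ᶠ q : ℝ × ℝ in nhds (0, 0), (q.2 - 0) * Q (q.2, 0) = f q.2 - f 0 := by
      have hψ : Filter.Tendsto (fun q : ℝ × ℝ => ((q.2, (0:ℝ)) : ℝ × ℝ))
          (nhds (0, 0)) (nhds (0, 0)) := by
        have hc : Continuous (fun q : ℝ × ℝ => ((q.2, (0:ℝ)) : ℝ × ℝ)) :=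
          continuous_snd.prodMk continuous_const
        have h := hc.tendsto ((0, 0) : ℝ × ℝ)
        simpa using h
      exact hψ.eventually hQid
    have hfg : ∀ᶠ q : ℝ × ℝ in nhds (0, 0), f (g q.1) = q.1 :=
      (continuous_fst.tendsto ((0, 0) : ℝ × ℝ)).eventually (hinv.mono fun x hx => hx.2)
    have hDne : ∀ᶠ q : ℝ × ℝ in nhds (0, 0), Q (q.2, 0) ≠ 0 :=
      hD.continuousAt.eventually_ne ha1
    filter_upwards [hA, hB, hfg, hDne] with q h1 h2 h3 h4 hgx hfx
    have hx0 : q.2 ≠ 0 := fun h => hfx (by rw [h, hf0])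
    have hnum : q.1 - f q.2 = (g q.1 - q.2) * Q (g q.1, q.2) := by rw [h1, h3]
    have hden : f q.2 = q.2 * Q (q.2, 0) := by
      rw [sub_zero, hf0, sub_zero] at h2
      exact h2.symm
    have hgt : g q.1 - q.2 ≠ 0 := sub_ne_zero.mpr hgx
    have key : (q.1 - f q.2) / (g q.1 - q.2) * (q.2 / f q.2) = H q := by
      rw [hH_def]
      simp only
      rw [hnum, hden]
      field_simp
    show Real.sqrt (H q) = _
    rw [key]
  · have hcont : ContinuousAt (fun x : ℝ => Q (x, 0)) 0 := by
      have h := hQan.continuousAt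
      have hinner : ContinuousAt (fun x : ℝ => ((x, (0:ℝ)) : ℝ × ℝ)) 0 :=
        (continuous_id.prodMk continuous_const).continuousAt
      exact ContinuousAt.comp (g := Q) (f := fun x : ℝ => ((x, (0:ℝ)) : ℝ × ℝ)) h hinner
    have hne0 : ∀ᶠ x : ℝ in nhds 0, Q (x, 0) ≠ 0 := hcont.eventually_ne ha1
    filter_upwards [hne0] with x hx
    show Real.sqrt (H (0, x)) = 1
    rw [hH_def]
    simp only
    rw [hg0, hQsymm x, div_self hx, Real.sqrt_one]
end

section
/- The function φ(t,x) = (x/arctan x) · sqrt( ((1 + tan²t)(t² - arctan²x)) / (tan²t - x²) ) is analytic in a neighborhood of (0,0) ∈ ℝ², and φ(0,x) = 1 for all x in a neighborhood of 0 (extended to x = 0 and to the zero sets of the denominators by limiting values). -/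
open Filter Topology

private lemma realAnalytic_of_complex {g : ℂ → ℂ} {f : ℝ → ℝ} {x : ℝ}
    (hg : AnalyticAt ℂ g (x : ℂ)) (h : ∀ y : ℝ, f y = (g y).re) :
    AnalyticAt ℝ f x := by
  have h2 : AnalyticAt ℝ (fun y : ℝ => g (y : ℂ)) x :=
    hg.restrictScalars.comp (Complex.ofRealCLM.analyticAt x)
  have h3 : AnalyticAt ℝ (fun y : ℝ => (g (y : ℂ)).re) x :=
    (Complex.reCLM.analyticAt _).comp h2
  exact h3.congr (Filter.Eventually.of_forall fun y => (h y).symm)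

private lemma analyticAt_rsin (x : ℝ) : AnalyticAt ℝ Real.sin x := by
  refine realAnalytic_of_complex ?_ (fun y => (Complex.sin_ofReal_re y).symm)
  exact Complex.analyticAt_iff_eventually_differentiableAt.mpr
    (Filter.Eventually.of_forall fun z => Complex.differentiable_sin z)

private lemma analyticAt_rarctan : AnalyticAt ℝ Real.arctan 0 := by
  have h0 : ((0 : ℝ) : ℂ) = 0 := by norm_num
  refine realAnalytic_of_complex (g := Complex.arctan) ?_ ?_
  · rw [h0]
    have h1 : AnalyticAt ℂ (fun z : ℂ => (1 + z * Complex.I) / (1 - z * Complex.I)) (0 : ℂ) := by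
      apply AnalyticAt.div
      · exact analyticAt_const.add (analyticAt_id.mul analyticAt_const)
      · exact analyticAt_const.sub (analyticAt_id.mul analyticAt_const)
      · simp
    have h2 := (analyticAt_const (v := -Complex.I / 2)).mul
      (h1.clog (by simp [Complex.mem_slitPlane_iff]))
    exact h2.congr (Filter.Eventually.of_forall fun z => rfl)
  · intro y
    rw [← Complex.ofReal_arctan, Complex.ofReal_re]

private lemma analyticAt_rlog {x : ℝ} (hx : 0 < x) : AnalyticAt ℝ Real.log x :=
  realAnalytic_of_complex (analyticAt_clog (by simp [Complex.mem_slitPlane_iff, hx]))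
    fun y => (Complex.log_ofReal_re y).symm

private lemma analyticAt_rsqrt_one : AnalyticAt ℝ Real.sqrt 1 := by
  have h : AnalyticAt ℝ (fun y : ℝ => Real.exp (Real.log y * (1/2 : ℝ))) 1 :=
    ((analyticAt_rlog one_pos).mul analyticAt_const).rexp
  apply h.congr
  filter_upwards [eventually_gt_nhds (show (0:ℝ) < 1 by norm_num)] with y hy
  rw [Real.sqrt_eq_rpow, Real.rpow_def_of_pos hy]

private lemma sin_ne_zero_of_abs_lt_pi {u : ℝ} (h0 : u ≠ 0) (h : |u| < Real.pi) :
    Real.sin u ≠ 0 := by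
  rcases lt_or_gt_of_ne h0 with hneg | hpos
  · have h1 : 0 < Real.sin (-u) :=
      Real.sin_pos_of_pos_of_lt_pi (by linarith) (by rw [abs_of_neg hneg] at h; linarith)
    rw [Real.sin_neg] at h1
    exact ne_of_lt (by linarith)
  · exact ne_of_gt (Real.sin_pos_of_pos_of_lt_pi hpos (by rwa [abs_of_pos hpos] at h))

private lemma exists_sinc : ∃ s : ℝ → ℝ, AnalyticAt ℝ s 0 ∧ s 0 = 1 ∧
    ∀ᶠ u in nhds (0:ℝ), u ≠ 0 → s u = Real.sin u / u := by
  have hsin : AnalyticAt ℝ Real.sin 0 := analyticAt_rsin 0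
  have hord : analyticOrderAt Real.sin 0 ≠ ⊤ := by
    intro h
    rw [analyticOrderAt_eq_top] at h
    rw [Metric.eventually_nhds_iff] at h
    obtain ⟨ε, hε, hball⟩ := h
    have h1 : (0:ℝ) < min (ε/2) 1 := by positivity
    have h2 := hball (show dist (min (ε/2) 1) 0 < ε by
      rw [Real.dist_0_eq_abs, abs_of_pos h1]
      calc min (ε/2) 1 ≤ ε/2 := min_le_left _ _
        _ < ε := by linarith)
    have h3 : 0 < Real.sin (min (ε/2) 1) :=
      Real.sin_pos_of_pos_of_lt_pi h1
        (lt_of_le_of_lt (min_le_right _ _) (by linarith [Real.pi_gt_three]))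
    rw [h2] at h3; exact lt_irrefl 0 h3
  obtain ⟨n, hn⟩ := WithTop.ne_top_iff_exists.mp hord
  obtain ⟨g, hg, hg0, heq⟩ := (hsin.analyticOrderAt_eq_natCast).mp hn.symm
  have hslope : Tendsto (fun u : ℝ => Real.sin u / u) (nhdsWithin (0:ℝ) {(0:ℝ)}ᶜ) (nhds 1) := by
    have h := Real.hasDerivAt_sin 0
    rw [Real.cos_zero] at h
    have h2 := hasDerivAt_iff_tendsto_slope.mp h
    refine Tendsto.congr (fun u => ?_) h2
    rw [slope_def_field, Real.sin_zero, sub_zero, sub_zero]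
  match n, hn, heq with
  | 0, hn, heq =>
    exfalso
    have h0 := heq.self_of_nhds
    simp only [sub_zero, pow_zero, one_smul, Real.sin_zero] at h0
    exact hg0 h0.symm
  | 1, hn, heq =>
    refine ⟨g, hg, ?_, ?_⟩
    · have h1 : Tendsto g (nhdsWithin (0:ℝ) {(0:ℝ)}ᶜ) (nhds (g 0)) :=
        hg.continuousAt.continuousWithinAt.tendsto
      have h2 : Tendsto g (nhdsWithin (0:ℝ) {(0:ℝ)}ᶜ) (nhds 1) := by
        refine hslope.congr' ?_
        filter_upwards [self_mem_nhdsWithin, heq.filter_mono nhdsWithin_le_nhds] with u hu hequ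
        rw [hequ, sub_zero, pow_one, smul_eq_mul,
          mul_div_cancel_left₀ _ (by exact hu : u ≠ 0)]
      exact tendsto_nhds_unique h1 h2
    · filter_upwards [heq] with u hequ hu
      rw [hequ, sub_zero, pow_one, smul_eq_mul, mul_div_cancel_left₀ _ hu]
  | (n + 2), hn, heq =>
    exfalso
    have h2 : Tendsto (fun u : ℝ => u ^ (n+1) * g u) (nhdsWithin (0:ℝ) {(0:ℝ)}ᶜ) (nhds 1) := by
      refine hslope.congr' ?_
      filter_upwards [self_mem_nhdsWithin, heq.filter_mono nhdsWithin_le_nhds] with u hu hequ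
      have hu0 : u ≠ 0 := hu
      rw [hequ, sub_zero, smul_eq_mul, pow_succ, mul_comm (u ^ (n+1)) u, mul_assoc,
        mul_div_cancel_left₀ _ hu0]
    have h3 : Tendsto (fun u : ℝ => u ^ (n+1) * g u) (nhdsWithin (0:ℝ) {(0:ℝ)}ᶜ)
        (nhds ((0:ℝ) ^ (n+1) * g 0)) :=
      (((continuous_pow (n+1)).continuousAt (x := (0:ℝ))).mul
        hg.continuousAt).continuousWithinAt.tendsto
    have h4 := tendsto_nhds_unique h2 h3
    rw [zero_pow (Nat.succ_ne_zero n), zero_mul] at h4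
    norm_num at h4

/-- The generating function
`φ(t,x) = (x / arctan x) * sqrt( (1 + tan² t)(t² - arctan² x) / (tan² t - x²) )`
extends to a function analytic in a neighborhood of `(0,0)` with `φ(0,x) = 1` near `0`. -/
theorem stmt_4 :
    ∃ φ : ℝ × ℝ → ℝ,
      AnalyticAt ℝ φ (0, 0) ∧
      (∀ᶠ p : ℝ × ℝ in nhds (0, 0), Real.tan p.1 ^ 2 ≠ p.2 ^ 2 → p.2 ≠ 0 →
        φ p = p.2 / Real.arctan p.2 *
          Real.sqrt ((1 + Real.tan p.1 ^ 2) * (p.1 ^ 2 - Real.arctan p.2 ^ 2) /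
            (Real.tan p.1 ^ 2 - p.2 ^ 2))) ∧
      (∀ᶠ x in nhds (0 : ℝ), φ (0, x) = 1) := by
  obtain ⟨s, hs, hs0, hsev⟩ := exists_sinc
  have hspos : ∀ᶠ u in nhds (0:ℝ), 0 < s u :=
    Filter.Tendsto.eventually (p := fun y : ℝ => 0 < y) hs.continuousAt
      (by rw [hs0]; exact eventually_gt_nhds one_pos)
  obtain ⟨δ, hδpos, hδ⟩ := Metric.eventually_nhds_iff.mp (hsev.and hspos)
  refine ⟨fun p : ℝ × ℝ => s (Real.arctan p.2) *
      (Real.sqrt (s (p.1 - Real.arctan p.2) * s (p.1 + Real.arctan p.2)))⁻¹, ?_, ?_, ?_⟩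
  · -- analyticity
    have hθa : AnalyticAt ℝ (fun p : ℝ × ℝ => Real.arctan p.2) ((0:ℝ), (0:ℝ)) :=
      AnalyticAt.comp (f := fun p : ℝ × ℝ => p.2) (g := Real.arctan)
        analyticAt_rarctan analyticAt_snd
    have h1 : AnalyticAt ℝ (fun p : ℝ × ℝ => p.1 - Real.arctan p.2) ((0:ℝ), (0:ℝ)) :=
      analyticAt_fst.sub hθa
    have h2 : AnalyticAt ℝ (fun p : ℝ × ℝ => p.1 + Real.arctan p.2) ((0:ℝ), (0:ℝ)) :=
      analyticAt_fst.add hθa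
    have hs1 : AnalyticAt ℝ (fun p : ℝ × ℝ => s (p.1 - Real.arctan p.2)) ((0:ℝ), (0:ℝ)) := by
      refine AnalyticAt.comp (g := s) ?_ h1
      simpa using hs
    have hs2 : AnalyticAt ℝ (fun p : ℝ × ℝ => s (p.1 + Real.arctan p.2)) ((0:ℝ), (0:ℝ)) := by
      refine AnalyticAt.comp (g := s) ?_ h2
      simpa using hs
    have hsθ : AnalyticAt ℝ (fun p : ℝ × ℝ => s (Real.arctan p.2)) ((0:ℝ), (0:ℝ)) := by
      refine AnalyticAt.comp (g := s) ?_ hθa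
      simpa using hs
    have hmul := hs1.mul hs2
    have hval : s ((0:ℝ) - Real.arctan 0) * s (0 + Real.arctan 0) = 1 := by simp [hs0]
    have hsqrt : AnalyticAt ℝ
        (fun p : ℝ × ℝ => Real.sqrt (s (p.1 - Real.arctan p.2) * s (p.1 + Real.arctan p.2)))
        ((0:ℝ), (0:ℝ)) := by
      refine AnalyticAt.comp (g := Real.sqrt)
        (f := fun p : ℝ × ℝ => s (p.1 - Real.arctan p.2) * s (p.1 + Real.arctan p.2)) ?_ hmul
      show AnalyticAt ℝ Real.sqrt (s ((0:ℝ) - Real.arctan 0) * s (0 + Real.arctan 0))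
      rw [hval]
      exact analyticAt_rsqrt_one
    have hne : Real.sqrt (s ((((0:ℝ),(0:ℝ)) : ℝ × ℝ).1 - Real.arctan (((0:ℝ),(0:ℝ)) : ℝ × ℝ).2) *
        s ((((0:ℝ),(0:ℝ)) : ℝ × ℝ).1 + Real.arctan (((0:ℝ),(0:ℝ)) : ℝ × ℝ).2)) ≠ 0 := by
      show Real.sqrt (s ((0:ℝ) - Real.arctan 0) * s (0 + Real.arctan 0)) ≠ 0
      rw [hval]; simp
    exact hsθ.mul (hsqrt.inv hne)
  · -- eventual equality
    have hπ : (0:ℝ) < Real.pi := Real.pi_pos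
    set ε := min (δ/2) (Real.pi/4) with hεdef
    have hεpos : 0 < ε := lt_min (by linarith) (by linarith)
    have hεδ : ε ≤ δ/2 := min_le_left _ _
    have hεπ : ε ≤ Real.pi/4 := min_le_right _ _
    have hev1 : ∀ᶠ p : ℝ × ℝ in nhds ((0:ℝ), (0:ℝ)), |p.1| < ε := by
      have h := (continuous_fst.continuousAt (x := ((0:ℝ),(0:ℝ)))).eventually
        (eventually_abs_sub_lt 0 hεpos)
      simpa using h
    have hev2 : ∀ᶠ p : ℝ × ℝ in nhds ((0:ℝ), (0:ℝ)), |Real.arctan p.2| < ε := by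
      have harc : Tendsto (fun p : ℝ × ℝ => Real.arctan p.2) (nhds ((0:ℝ),(0:ℝ))) (nhds 0) := by
        have h := (Real.continuous_arctan.comp continuous_snd).continuousAt (x := ((0:ℝ),(0:ℝ)))
        simpa [ContinuousAt, Function.comp_def] using h
      have h := harc.eventually (eventually_abs_sub_lt 0 hεpos)
      simpa using h
    filter_upwards [hev1, hev2] with p htabs hθabs htan hx2
    obtain ⟨t, x⟩ := p
    simp only at htabs hθabs htan hx2 ⊢
    set θ := Real.arctan x with hθdef
    have hxθ : x = Real.tan θ := (Real.tan_arctan x).symm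
    have hθ0 : θ ≠ 0 := fun h => hx2 (Real.arctan_eq_zero_iff.mp h)
    have hta : t - θ ≠ 0 := by
      intro h
      apply htan
      rw [sub_eq_zero] at h
      rw [h, hxθ]
    have htb0 : t + θ ≠ 0 := by
      intro h
      apply htan
      have ht : t = -θ := by linarith
      rw [ht, Real.tan_neg, hxθ]
      ring
    obtain ⟨ht1, ht2⟩ := abs_lt.mp htabs
    obtain ⟨hq1, hq2⟩ := abs_lt.mp hθabs
    have hcost : 0 < Real.cos t :=
      Real.cos_pos_of_mem_Ioo ⟨by linarith, by linarith⟩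
    have hcosθ : 0 < Real.cos θ :=
      Real.cos_pos_of_mem_Ioo ⟨by linarith, by linarith⟩
    have habsa : |t - θ| < 2 * ε := by
      rw [abs_lt]; constructor <;> linarith
    have habsb : |t + θ| < 2 * ε := by
      rw [abs_lt]; constructor <;> linarith
    have hsina : Real.sin (t - θ) ≠ 0 :=
      sin_ne_zero_of_abs_lt_pi hta (by linarith)
    have hsinb : Real.sin (t + θ) ≠ 0 :=
      sin_ne_zero_of_abs_lt_pi htb0 (by linarith)
    obtain ⟨hsaeq, hsapos⟩ := hδ (show dist (t - θ) 0 < δ by rw [Real.dist_0_eq_abs]; linarith)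
    obtain ⟨hsbeq, hsbpos⟩ := hδ (show dist (t + θ) 0 < δ by rw [Real.dist_0_eq_abs]; linarith)
    obtain ⟨hsθeq, hsθpos⟩ := hδ (show dist θ 0 < δ by rw [Real.dist_0_eq_abs]; linarith)
    have hsaeq' := hsaeq hta
    have hsbeq' := hsbeq htb0
    have hsθeq' := hsθeq hθ0
    -- the key algebraic identity
    have htrig : Real.sin (t - θ) * Real.sin (t + θ)
        = Real.sin t ^ 2 * Real.cos θ ^ 2 - Real.cos t ^ 2 * Real.sin θ ^ 2 := by
      rw [Real.sin_sub, Real.sin_add]; ring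
    have e1 : (1 + Real.tan t ^ 2) * (t ^ 2 - θ ^ 2) / (Real.tan t ^ 2 - x ^ 2)
        = Real.cos θ ^ 2 * (s (t - θ) * s (t + θ))⁻¹ := by
      rw [hsaeq', hsbeq', hxθ, Real.tan_eq_sin_div_cos t, Real.tan_eq_sin_div_cos θ]
      have hden : (Real.sin t / Real.cos t) ^ 2 - (Real.sin θ / Real.cos θ) ^ 2
          = Real.sin (t - θ) * Real.sin (t + θ) / (Real.cos t ^ 2 * Real.cos θ ^ 2) := by
        rw [htrig]; field_simp
      have h1 : 1 + (Real.sin t / Real.cos t) ^ 2 = 1 / Real.cos t ^ 2 := by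
        field_simp
        exact Real.cos_sq_add_sin_sq t
      rw [hden, h1]
      field_simp
      ring
    have e2 : Real.sqrt ((1 + Real.tan t ^ 2) * (t ^ 2 - θ ^ 2) / (Real.tan t ^ 2 - x ^ 2))
        = Real.cos θ * (Real.sqrt (s (t - θ) * s (t + θ)))⁻¹ := by
      rw [e1, Real.sqrt_mul (sq_nonneg _), Real.sqrt_sq hcosθ.le, Real.sqrt_inv]
    rw [e2]
    rw [show x / θ * (Real.cos θ * (Real.sqrt (s (t - θ) * s (t + θ)))⁻¹)
        = (x / θ * Real.cos θ) * (Real.sqrt (s (t - θ) * s (t + θ)))⁻¹ by ring]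
    congr 1
    rw [hsθeq', hxθ, Real.tan_eq_sin_div_cos]
    field_simp
  · -- value 1 at t = 0
    have hev3 : ∀ᶠ x in nhds (0:ℝ), |Real.arctan x| < δ := by
      have h' : Tendsto Real.arctan (nhds (0:ℝ)) (nhds 0) := by
        have := Real.continuous_arctan.continuousAt (x := (0:ℝ))
        simpa [ContinuousAt] using this
      simpa using h'.eventually (eventually_abs_sub_lt 0 hδpos)
    filter_upwards [hev3] with x hx
    set θ := Real.arctan x with hθdef
    obtain ⟨heq1, hpos1⟩ := hδ (show dist θ 0 < δ by rw [Real.dist_0_eq_abs]; exact hx)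
    obtain ⟨heq2, hpos2⟩ := hδ (show dist (-θ) 0 < δ by rw [Real.dist_0_eq_abs, abs_neg]; exact hx)
    have hsymm : s (0 - θ) = s θ := by
      rw [zero_sub]
      by_cases h : θ = 0
      · rw [h, neg_zero]
      · rw [heq2 (neg_ne_zero.mpr h), heq1 h, Real.sin_neg, neg_div_neg_eq]
    rw [hsymm, zero_add, Real.sqrt_mul_self hpos1.le, mul_inv_cancel₀ (ne_of_gt hpos1)]
end

section
/- For the linear modified dynamics in Fourier space, ∂ₜÛ_λ = M_λ Û_λ with M_λ = [[0, 1], [-λ²/(1 + (1/6)h²λ²), 0]], the eigenvalues of M_λ are ±i ω(λ) with ω(λ) = |λ|/√(1 + h²λ²/6), and sup over all λ ∈ ℝ of ω(λ) equals √6/h; in particular all frequencies of the variational modified equation are bounded by √6/h uniformly in the wave number. -/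
/-- For the linear variational modified dynamics in Fourier space, the matrix
`M_λ = [[0, 1], [-λ²/(1 + h²λ²/6), 0]]` has eigenvalues `± i ω(λ)` with
`ω(λ) = |λ|/√(1 + h²λ²/6)`, and `sup_λ ω(λ) = √6/h`: all frequencies are bounded by
`√6/h` uniformly in the wave number. -/
theorem stmt_13 (h : ℝ) (hh : 0 < h) :
    (∀ l : ℝ,
      Module.End.HasEigenvalue
        (Matrix.mulVecLin
          (!![0, 1; -(l : ℂ) ^ 2 / (1 + (1 / 6 : ℂ) * (h : ℂ) ^ 2 * (l : ℂ) ^ 2), 0]))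
        (Complex.I * (|l| / Real.sqrt (1 + h ^ 2 * l ^ 2 / 6) : ℝ)) ∧
      Module.End.HasEigenvalue
        (Matrix.mulVecLin
          (!![0, 1; -(l : ℂ) ^ 2 / (1 + (1 / 6 : ℂ) * (h : ℂ) ^ 2 * (l : ℂ) ^ 2), 0]))
        (-(Complex.I * (|l| / Real.sqrt (1 + h ^ 2 * l ^ 2 / 6) : ℝ)))) ∧
    (⨆ l : ℝ, |l| / Real.sqrt (1 + h ^ 2 * l ^ 2 / 6)) = Real.sqrt 6 / h := by
  constructor
  · intro l
    set D : ℝ := 1 + h ^ 2 * l ^ 2 / 6 with hDdef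
    have hD : 0 < D := by positivity
    set ω : ℝ := |l| / Real.sqrt D with hωdef
    have hω2 : ω ^ 2 = l ^ 2 / D := by
      rw [hωdef, div_pow, sq_abs, Real.sq_sqrt hD.le]
    have ha : -(l : ℂ) ^ 2 / (1 + (1 / 6 : ℂ) * (h : ℂ) ^ 2 * (l : ℂ) ^ 2)
        = -((ω : ℂ)) ^ 2 := by
      have h1 : ((1 : ℂ) + (1 / 6) * (h : ℂ) ^ 2 * (l : ℂ) ^ 2) = ((D : ℝ) : ℂ) := by
        rw [hDdef]; push_cast; ring
      have h2 : ((ω : ℂ)) ^ 2 = ((ω ^ 2 : ℝ) : ℂ) := by push_cast; ring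
      rw [h1, h2, hω2]
      push_cast
      rw [neg_div]
    have main : ∀ μ : ℂ, μ ^ 2 = -((ω : ℂ)) ^ 2 →
        Module.End.HasEigenvalue
          (Matrix.mulVecLin
            (!![0, 1; -(l : ℂ) ^ 2 / (1 + (1 / 6 : ℂ) * (h : ℂ) ^ 2 * (l : ℂ) ^ 2), 0])) μ := by
      intro μ hμ
      apply Module.End.hasEigenvalue_of_hasEigenvector (x := ![1, μ])
      refine ⟨Module.End.mem_eigenspace_iff.mpr ?_, ?_⟩
      · funext i
        fin_cases i <;>
          simp [Matrix.mulVecLin_apply, Matrix.mulVec, dotProduct]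
        have hmm : μ * μ = -(ω : ℂ) ^ 2 := by rw [← hμ]; ring
        rw [hmm, ← ha]; norm_num
      · intro hv
        have := congrFun hv 0
        simp at this
    constructor
    · exact main _ (by rw [mul_pow, Complex.I_sq]; ring)
    · exact main _ (by rw [neg_sq, mul_pow, Complex.I_sq]; ring)
  · have hbdd : ∀ l : ℝ, |l| / Real.sqrt (1 + h ^ 2 * l ^ 2 / 6) ≤ Real.sqrt 6 / h := by
      intro l
      have hD : (0:ℝ) < 1 + h ^ 2 * l ^ 2 / 6 := by positivity
      rw [div_le_div_iff₀ (Real.sqrt_pos.mpr hD) hh]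
      have hsq : (|l| * h) ^ 2 ≤ (Real.sqrt 6 * Real.sqrt (1 + h ^ 2 * l ^ 2 / 6)) ^ 2 := by
        rw [mul_pow, mul_pow, sq_abs, Real.sq_sqrt (by norm_num : (0:ℝ) ≤ 6),
          Real.sq_sqrt hD.le]
        nlinarith
      have h1 : (0:ℝ) ≤ Real.sqrt 6 * Real.sqrt (1 + h ^ 2 * l ^ 2 / 6) := by positivity
      nlinarith [abs_nonneg l, hh.le]
    have hid : ∀ l : ℝ, |l| / Real.sqrt (1 + h ^ 2 * l ^ 2 / 6)
        = Real.sqrt 6 / h * Real.sqrt (1 - 1 / (1 + h ^ 2 * l ^ 2 / 6)) := by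
      intro l
      have hD : (0:ℝ) < 1 + h ^ 2 * l ^ 2 / 6 := by positivity
      have e1 : |l| / Real.sqrt (1 + h ^ 2 * l ^ 2 / 6)
          = Real.sqrt (l ^ 2 / (1 + h ^ 2 * l ^ 2 / 6)) := by
        rw [Real.sqrt_div (sq_nonneg l), Real.sqrt_sq_eq_abs]
      have e2 : Real.sqrt 6 / h = Real.sqrt (6 / h ^ 2) := by
        rw [Real.sqrt_div (by norm_num : (0:ℝ) ≤ 6), Real.sqrt_sq hh.le]
      rw [e1, e2, ← Real.sqrt_mul (by positivity)]
      congr 1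
      field_simp
      ring
    have htend : Filter.Tendsto (fun l : ℝ => |l| / Real.sqrt (1 + h ^ 2 * l ^ 2 / 6))
        Filter.atTop (nhds (Real.sqrt 6 / h)) := by
      simp only [hid]
      have hdenom : Filter.Tendsto (fun l : ℝ => 1 + h ^ 2 * l ^ 2 / 6)
          Filter.atTop Filter.atTop := by
        apply Filter.tendsto_atTop_add_const_left
        have : Filter.Tendsto (fun l : ℝ => l ^ 2) Filter.atTop Filter.atTop :=
          Filter.tendsto_pow_atTop (by norm_num)
        exact (this.const_mul_atTop (by positivity)).atTop_div_const (by norm_num)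
      have hinv : Filter.Tendsto (fun l : ℝ => 1 / (1 + h ^ 2 * l ^ 2 / 6))
          Filter.atTop (nhds 0) := by
        simpa [Pi.inv_def] using hdenom.inv_tendsto_atTop
      have hsub : Filter.Tendsto (fun l : ℝ => 1 - 1 / (1 + h ^ 2 * l ^ 2 / 6))
          Filter.atTop (nhds 1) := by
        simpa using (tendsto_const_nhds.sub hinv)
      have hsqrt := (Real.continuous_sqrt.continuousAt (x := (1:ℝ))).tendsto.comp hsub
      have : Filter.Tendsto (fun l : ℝ => Real.sqrt 6 / h * Real.sqrt (1 - 1 / (1 + h ^ 2 * l ^ 2 / 6)))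
          Filter.atTop (nhds (Real.sqrt 6 / h * Real.sqrt 1)) := hsqrt.const_mul _
      simpa using this
    have hBdd : BddAbove (Set.range fun l : ℝ => |l| / Real.sqrt (1 + h ^ 2 * l ^ 2 / 6)) :=
      ⟨Real.sqrt 6 / h, by rintro x ⟨l, rfl⟩; exact hbdd l⟩
    apply le_antisymm
    · exact ciSup_le hbdd
    · refine le_of_tendsto htend ?_
      filter_upwards with l
      exact le_ciSup hBdd l
end
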